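/- arXiv:alg-geom/9503024 — 2 statements merged into one kernel-verified Lean document; each statement's English description precedes it below -/
import Mathlib

section
/- Let a_1 ≤ ... ≤ a_{r+1} and b_1 ≤ ... ≤ b_{r+1} be integers and let N be an integer. Suppose that for every t ≥ N, Σ_{i=1}^{r+1} C(a_i − t − 1, 3)·[a_i − t ≥ 4] = Σ_{i=1}^{r+1} C(b_i − t − 1, 3)·[b_i − t ≥ 4] (where C(·,3) is the binomial coefficient and [P] = 1 if P holds, else 0). Then the multisets { a_i : a_i ≥ N + 4 } and { b_i : b_i ≥ N + 4 } are equal. -/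
/-! The third finite difference in `t` of `C(c - t - 1, 3)·[c - t ≥ 4]` is the indicator of
`c ≥ t + 4` (Pascal's rule applied three times). So the hypothesis determines, for every
`s ≥ N + 4`, how many entries are `≥ s`, and one more difference gives the multiplicity of each
value `≥ N + 4`. -/

lemma choose_three_toNat_third_difference (c t : ℤ) :
    ((c - t - 1).toNat.choose 3 : ℤ) - 3 * (c - (t + 1) - 1).toNat.choose 3
      + 3 * (c - (t + 2) - 1).toNat.choose 3 - (c - (t + 3) - 1).toNat.choose 3
      = if t + 4 ≤ c then 1 else 0 := by
  split_ifs with hc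
  · obtain ⟨n, hn⟩ : ∃ n : ℕ, c - t - 4 = n := ⟨(c - t - 4).toNat, by omega⟩
    rw [show (c - t - 1).toNat = n + 3 by omega, show (c - (t + 1) - 1).toNat = n + 2 by omega,
      show (c - (t + 2) - 1).toNat = n + 1 by omega, show (c - (t + 3) - 1).toNat = n by omega]
    simp only [Nat.choose_succ_succ', Nat.choose_zero_right]
    push_cast
    ring
  · rw [Nat.choose_eq_zero_of_lt (show (c - t - 1).toNat < 3 by omega),
      Nat.choose_eq_zero_of_lt (show (c - (t + 1) - 1).toNat < 3 by omega),
      Nat.choose_eq_zero_of_lt (show (c - (t + 2) - 1).toNat < 3 by omega),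
      Nat.choose_eq_zero_of_lt (show (c - (t + 3) - 1).toNat < 3 by omega)]
    simp

lemma ite_four_le_choose_toNat_eq (n : ℤ) :
    (if 4 ≤ n then ((n - 1).toNat.choose 3 : ℤ) else 0) = (n - 1).toNat.choose 3 :=
  ite_eq_left_iff.2 fun hn => by rw [Nat.choose_eq_zero_of_lt (by omega), Nat.cast_zero]

/-- `h³(ℙ³, ⊕_{c ∈ A} 𝒪(t - c))`. -/
def h3Twists (A : Multiset ℤ) (t : ℤ) : ℤ :=
  (A.map fun c => ((c - t - 1).toNat.choose 3 : ℤ)).sum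

lemma card_filter_le_eq_h3Twists (A : Multiset ℤ) (t : ℤ) :
    ((A.filter (t + 4 ≤ ·)).card : ℤ) = h3Twists A t - 3 * h3Twists A (t + 1)
      + 3 * h3Twists A (t + 2) - h3Twists A (t + 3) := by
  induction A using Multiset.induction_on with
  | empty => simp [h3Twists]
  | cons c A ih =>
    have hcard : ((if t + 4 ≤ c then {c} else 0 : Multiset ℤ).card : ℤ)
        = if t + 4 ≤ c then 1 else 0 := by
      split_ifs <;> rfl
    simp only [h3Twists, Multiset.map_cons, Multiset.sum_cons, Multiset.filter_cons,
      Multiset.card_add, Nat.cast_add, hcard, ← choose_three_toNat_third_difference c t] at ih ⊢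
    rw [ih]
    ring

lemma count_add_card_filter_succ_le (A : Multiset ℤ) (x : ℤ) :
    A.count x + (A.filter (x + 1 ≤ ·)).card = (A.filter (x ≤ ·)).card := by
  induction A using Multiset.induction_on with
  | empty => simp
  | cons c A ih =>
    simp only [Multiset.count_cons, Multiset.filter_cons, Multiset.card_add]
    split_ifs <;> simp only [Multiset.card_zero, Multiset.card_singleton] <;> omega

lemma filter_le_eq_of_card_filter_le_eq {A B : Multiset ℤ} {M : ℤ}
    (h : ∀ s, M ≤ s → (A.filter (s ≤ ·)).card = (B.filter (s ≤ ·)).card) :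
    A.filter (M ≤ ·) = B.filter (M ≤ ·) := by
  ext x
  simp only [Multiset.count_filter]
  split_ifs with hx
  · have hA := count_add_card_filter_succ_le A x
    have hB := count_add_card_filter_succ_le B x
    have := h x hx
    have := h (x + 1) (by omega)
    omega
  · rfl

lemma filter_le_eq_of_h3Twists_eq {A B : Multiset ℤ} {N : ℤ}
    (h : ∀ t, N ≤ t → h3Twists A t = h3Twists B t) :
    A.filter (N + 4 ≤ ·) = B.filter (N + 4 ≤ ·) := by
  refine filter_le_eq_of_card_filter_le_eq fun s hs => ?_
  have hA := card_filter_le_eq_h3Twists A (s - 4)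
  have hB := card_filter_le_eq_h3Twists B (s - 4)
  rw [sub_add_cancel, h _ (by omega), h _ (by omega), h _ (by omega), h _ (by omega)] at hA
  rw [sub_add_cancel] at hB
  exact_mod_cast hA.trans hB.symm

theorem multiset_of_large_twists_determined_general (r : ℕ) (N : ℤ)
    (a b : Fin (r + 1) → ℤ)
    (hsum : ∀ t : ℤ, N ≤ t →
      (∑ i, if 4 ≤ a i - t then ((a i - t - 1).toNat.choose 3 : ℤ) else 0)
        = ∑ i, if 4 ≤ b i - t then ((b i - t - 1).toNat.choose 3 : ℤ) else 0) :
    (Finset.univ.val.map a).filter (fun x => N + 4 ≤ x)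
      = (Finset.univ.val.map b).filter (fun x => N + 4 ≤ x) := by
  refine filter_le_eq_of_h3Twists_eq fun t ht => ?_
  simpa only [h3Twists, Multiset.map_map, Function.comp_def, ← Finset.sum_eq_multiset_sum,
    ite_four_le_choose_toNat_eq, sub_right_comm] using hsum t ht

/-- If two non-decreasing `(r+1)`-tuples of twists give the same value of
`Σᵢ C(aᵢ − t − 1, 3)·[aᵢ − t ≥ 4]` for all `t ≥ N`, then the multisets of
entries `≥ N + 4` agree. -/
theorem multiset_of_large_twists_determined (r : ℕ) (N : ℤ)
    (a b : Fin (r + 1) → ℤ) (ha : Monotone a) (hb : Monotone b)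
    (hsum : ∀ t : ℤ, N ≤ t →
      (∑ i, if 4 ≤ a i - t then ((a i - t - 1).toNat.choose 3 : ℤ) else 0)
        = ∑ i, if 4 ≤ b i - t then ((b i - t - 1).toNat.choose 3 : ℤ) else 0) :
    (Finset.univ.val.map a).filter (fun x => N + 4 ≤ x)
      = (Finset.univ.val.map b).filter (fun x => N + 4 ≤ x) :=
  multiset_of_large_twists_determined_general r N a b hsum
end

section
/- Let A = (a_{ij}) be defined for a chain of 'link degrees' b_0 ≤ b_1 ≤ ... ≤ b_{m−1} and a threshold function: say index i is 'active' if b_i ≥ c + i for a fixed integer c. Suppose exactly k indices are active. Then after the rearrangement b'_0 = b_s − s, b'_i = b_{i−1} + 1 for 0 < i ≤ s, b'_i = b_i for i > s (where s is the first active index), the number of active indices of (b'_i) (i.e. indices with b'_i ≥ c + i) is still exactly k, and index 0 is active for (b'_i). -/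
/-!
Below the first active index `s` nothing is active, so the active indices of `b` are `s` together
with the active indices beyond `s`. The flip leaves `b` unchanged beyond `s`, makes `0` active
(since `b_s - s ≥ c`), and creates no active index in `1, …, s`: there `b'_i = b_{i-1} + 1` and
`b_{i-1} < c + (i - 1)`. So the active indices of `b'` are `0` together with the same indices
beyond `s`.
-/

open Finset

lemma filter_range_eq_insert_of_first {p : ℕ → Prop} [DecidablePred p] {m s : ℕ}
    (hs : s < m) (hps : p s) (hfirst : ∀ i < s, ¬ p i) :
    (range m).filter p = insert s ((range m).filter (fun i => s < i ∧ p i)) := by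
  ext i
  simp only [mem_filter, mem_range, mem_insert]
  constructor
  · rintro ⟨him, hpi⟩
    rcases lt_trichotomy i s with hlt | rfl | hgt
    · exact absurd hpi (hfirst i hlt)
    · exact Or.inl rfl
    · exact Or.inr ⟨him, hgt, hpi⟩
  · rintro (rfl | ⟨him, -, hpi⟩)
    exacts [⟨hs, hps⟩, ⟨him, hpi⟩]

lemma card_filter_range_eq_succ_of_first {p : ℕ → Prop} [DecidablePred p] {m s : ℕ}
    (hs : s < m) (hps : p s) (hfirst : ∀ i < s, ¬ p i) :
    ((range m).filter p).card = ((range m).filter (fun i => s < i ∧ p i)).card + 1 := by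
  rw [filter_range_eq_insert_of_first hs hps hfirst, card_insert_of_notMem]
  simp

def flipLink (b : ℕ → ℤ) (s i : ℕ) : ℤ :=
  if i = 0 then b s - s else if i ≤ s then b (i - 1) + 1 else b i

section flipLink

variable {b : ℕ → ℤ} {s i : ℕ}

lemma flipLink_zero : flipLink b s 0 = b s - s := rfl

lemma flipLink_of_pos_of_le (hi : 0 < i) (his : i ≤ s) : flipLink b s i = b (i - 1) + 1 := by
  simp [flipLink, hi.ne', his]

lemma flipLink_of_lt (hsi : s < i) : flipLink b s i = b i := by
  simp [flipLink, (Nat.zero_le s).trans_lt hsi |>.ne', not_le.2 hsi]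

lemma flipLink_lt_of_pos_of_le {c : ℤ} (hfirst : ∀ j < s, b j < c + j) (hi : 0 < i)
    (his : i ≤ s) : flipLink b s i < c + i := by
  have h := hfirst (i - 1) (by omega)
  rw [flipLink_of_pos_of_le hi his]
  push_cast [Nat.cast_sub hi] at h
  linarith

lemma pos_and_le_flipLink_iff {c : ℤ} (hfirst : ∀ j < s, b j < c + j) :
    0 < i ∧ c + i ≤ flipLink b s i ↔ s < i ∧ c + i ≤ b i := by
  rcases le_or_gt i s with his | hsi
  · have hnot : ¬ s < i := not_lt.2 his
    simp only [hnot, false_and, iff_false, not_and, not_le]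
    exact fun hi => flipLink_lt_of_pos_of_le hfirst hi his
  · rw [flipLink_of_lt hsi]
    exact and_congr_left fun _ => ⟨fun _ => hsi, fun _ => (Nat.zero_le s).trans_lt hsi⟩

end flipLink

theorem flip_first_active_general (b : ℕ → ℤ) (m s : ℕ) (c : ℤ) (k : ℕ)
    (hs : s < m)
    (hactive : c + s ≤ b s)
    (hfirst : ∀ i < s, b i < c + i)
    (hcount : ((Finset.range m).filter (fun i => c + i ≤ b i)).card = k) :
    (((Finset.range m).filter (fun i =>
        c + i ≤ (if i = 0 then b s - s else if i ≤ s then b (i - 1) + 1 else b i))).card = k)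
    ∧ c ≤ b s - s := by
  have hzero : c ≤ b s - s := by linarith
  refine ⟨?_, hzero⟩
  change ((range m).filter (fun i => c + i ≤ flipLink b s i)).card = k
  rw [← hcount, card_filter_range_eq_succ_of_first hs hactive fun i hi => not_le.2 (hfirst i hi),
    card_filter_range_eq_succ_of_first (s := 0) (by omega) (by simpa [flipLink_zero] using hzero)
      (by simp)]
  simp_rw [pos_and_le_flipLink_iff hfirst]

/-- Flipping the first 'active' link down to position 0 preserves the number of
active indices: with `b_0 ≤ b_1 ≤ ⋯` non-decreasing, index `i` active when
`b_i ≥ c + i`, `s < m` the first active index, and exactly `k` active indices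
among `0, …, m−1`, the rearranged sequence `b'_0 = b_s − s`,
`b'_i = b_{i−1} + 1` for `0 < i ≤ s`, `b'_i = b_i` for `i > s` has exactly `k`
active indices and index `0` active. -/
theorem flip_first_active (b : ℕ → ℤ) (m s : ℕ) (c : ℤ) (k : ℕ)
    (hmono : ∀ i, b i ≤ b (i + 1))
    (hs : s < m)
    (hactive : c + s ≤ b s)
    (hfirst : ∀ i < s, b i < c + i)
    (hcount : ((Finset.range m).filter (fun i => c + i ≤ b i)).card = k) :
    (((Finset.range m).filter (fun i =>
        c + i ≤ (if i = 0 then b s - s else if i ≤ s then b (i - 1) + 1 else b i))).card = k)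
    ∧ c ≤ b s - s :=
  flip_first_active_general b m s c k hs hactive hfirst hcount
end
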